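/- The sequent calculus IPCε and the natural deduction system NJε derive exactly the same sequents: a sequent Γ ⇒ A is provable in NJε if and only if it is provable in IPCε. -/
import Mathlib


-- Terms of intuitionistic predicate logic with Hilbert’s ε-symbol (de Bruijn indices).
mutual
inductive Tm : Type
  | var : Nat → Tm
  | const : Nat → Tm
  | eps : Fm → Tm
inductive Tms : Type
  | nil : Tms
  | cons : Tm → Tms → Tms
inductive Fm : Type
  | atom : Nat → Tms → Fm
  | bot : Fm
  | top : Fm
  | and : Fm → Fm → Fm
  | or : Fm → Fm → Fm
  | imp : Fm → Fm → Fm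
  | all : Fm → Fm
  | ex : Fm → Fm
end

-- Lifting (shift de Bruijn variables ≥ c by one).
mutual
def Tm.lift : Nat → Tm → Tm
  | c, .var n => if n < c then .var n else .var (n+1)
  | _, .const k => .const k
  | c, .eps A => .eps (Fm.lift (c+1) A)
def Tms.lift : Nat → Tms → Tms
  | _, .nil => .nil
  | c, .cons t ts => .cons (Tm.lift c t) (Tms.lift c ts)
def Fm.lift : Nat → Fm → Fm
  | c, .atom p ts => .atom p (Tms.lift c ts)
  | _, .bot => .bot
  | _, .top => .top
  | c, .and A B => .and (Fm.lift c A) (Fm.lift c B)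
  | c, .or A B => .or (Fm.lift c A) (Fm.lift c B)
  | c, .imp A B => .imp (Fm.lift c A) (Fm.lift c B)
  | c, .all A => .all (Fm.lift (c+1) A)
  | c, .ex A => .ex (Fm.lift (c+1) A)
end

-- Substitution of a term for de Bruijn variable m.
mutual
def Tm.subst : Nat → Tm → Tm → Tm
  | m, s, .var n => if n < m then .var n else if n = m then s else .var (n-1)
  | _, _, .const k => .const k
  | m, s, .eps A => .eps (Fm.subst (m+1) (Tm.lift 0 s) A)
def Tms.subst : Nat → Tm → Tms → Tms
  | _, _, .nil => .nil
  | m, s, .cons t ts => .cons (Tm.subst m s t) (Tms.subst m s ts)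
def Fm.subst : Nat → Tm → Fm → Fm
  | m, s, .atom p ts => .atom p (Tms.subst m s ts)
  | _, _, .bot => .bot
  | _, _, .top => .top
  | m, s, .and A B => .and (Fm.subst m s A) (Fm.subst m s B)
  | m, s, .or A B => .or (Fm.subst m s A) (Fm.subst m s B)
  | m, s, .imp A B => .imp (Fm.subst m s A) (Fm.subst m s B)
  | m, s, .all A => .all (Fm.subst (m+1) (Tm.lift 0 s) A)
  | m, s, .ex A => .ex (Fm.subst (m+1) (Tm.lift 0 s) A)
end

/-- `A.subst0 t` substitutes `t` for the outermost bound variable. -/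
def Fm.subst0 (A : Fm) (t : Tm) : Fm := Fm.subst 0 t A

/-- `t↓`: definedness of a term.  For `εx A(x)` it is `∃y(∃x A(x) → A(y))`;
for variables and constants it is `⊤`. -/
def Tm.down : Tm → Fm
  | .var _ => .top
  | .const _ => .top
  | .eps A => .ex (.imp (.ex (Fm.lift 1 (Fm.lift 1 A))) (Fm.lift 1 A))

/-- The Gentzen-style sequent calculus IPCε with ε-symbol:
`t↓`-guarded quantifier rules and the ε-form of the `∃`-left rule. -/
inductive IPCe : Set Fm → Fm → Prop
  | ax {Γ A} : A ∈ Γ → IPCe Γ A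
  | botL {Γ A} : Fm.bot ∈ Γ → IPCe Γ A
  | topR {Γ} : IPCe Γ .top
  | andR {Γ A B} : IPCe Γ A → IPCe Γ B → IPCe Γ (.and A B)
  | andL {Γ A B G} : Fm.and A B ∈ Γ → IPCe (insert A (insert B Γ)) G → IPCe Γ G
  | orR₁ {Γ A B} : IPCe Γ A → IPCe Γ (.or A B)
  | orR₂ {Γ A B} : IPCe Γ B → IPCe Γ (.or A B)
  | orL {Γ A B G} : Fm.or A B ∈ Γ → IPCe (insert A Γ) G → IPCe (insert B Γ) G →
      IPCe Γ G
  | impR {Γ A B} : IPCe (insert A Γ) B → IPCe Γ (.imp A B)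
  | impL {Γ A B G} : Fm.imp A B ∈ Γ → IPCe Γ A → IPCe (insert B Γ) G → IPCe Γ G
  | allR {Γ A} : IPCe (Fm.lift 0 '' Γ) A → IPCe Γ (.all A)
  | allL {Γ A t G} : Fm.all A ∈ Γ → IPCe Γ t.down →
      IPCe (insert (A.subst0 t) Γ) G → IPCe Γ G
  | exR {Γ A t} : IPCe Γ t.down → IPCe Γ (A.subst0 t) → IPCe Γ (.ex A)
  | exL {Γ A G} : Fm.ex A ∈ Γ → IPCe (insert (A.subst0 (.eps A)) Γ) G → IPCe Γ G
  | cut {Γ C G} : IPCe Γ C → IPCe (insert C Γ) G → IPCe Γ G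
/-- The natural deduction system NJε: intuitionistic natural deduction with
the existential instantiation rule and `t↓`-guarded quantifier rules. -/
inductive NJe : Set Fm → Fm → Prop
  | ax {Γ A} : A ∈ Γ → NJe Γ A
  | botE {Γ A} : NJe Γ .bot → NJe Γ A
  | topI {Γ} : NJe Γ .top
  | andI {Γ A B} : NJe Γ A → NJe Γ B → NJe Γ (.and A B)
  | andE₁ {Γ A B} : NJe Γ (.and A B) → NJe Γ A
  | andE₂ {Γ A B} : NJe Γ (.and A B) → NJe Γ B
  | orI₁ {Γ A B} : NJe Γ A → NJe Γ (.or A B)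
  | orI₂ {Γ A B} : NJe Γ B → NJe Γ (.or A B)
  | orE {Γ A B C} : NJe Γ (.or A B) → NJe (insert A Γ) C → NJe (insert B Γ) C →
      NJe Γ C
  | impI {Γ A B} : NJe (insert A Γ) B → NJe Γ (.imp A B)
  | impE {Γ A B} : NJe Γ (.imp A B) → NJe Γ A → NJe Γ B
  | allI {Γ A} : NJe (Fm.lift 0 '' Γ) A → NJe Γ (.all A)
  | allE {Γ A t} : NJe Γ t.down → NJe Γ (.all A) → NJe Γ (A.subst0 t)
  | exI {Γ A t} : NJe Γ t.down → NJe Γ (A.subst0 t) → NJe Γ (.ex A)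
  | epsI {Γ A} : NJe Γ (.ex A) → NJe Γ (A.subst0 (.eps A))

lemma IPCe.weaken {Γ A} (h : IPCe Γ A) : ∀ Δ, Γ ⊆ Δ → IPCe Δ A := by
  induction h with
  | ax h => intro Δ s; exact IPCe.ax (s h)
  | botL h => intro Δ s; exact IPCe.botL (s h)
  | topR => intro Δ s; exact IPCe.topR
  | andR _ _ ih1 ih2 => intro Δ s; exact IPCe.andR (ih1 _ s) (ih2 _ s)
  | andL h _ ih =>
      intro Δ s
      exact IPCe.andL (s h) (ih _ (Set.insert_subset_insert (Set.insert_subset_insert s)))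
  | orR₁ _ ih => intro Δ s; exact IPCe.orR₁ (ih _ s)
  | orR₂ _ ih => intro Δ s; exact IPCe.orR₂ (ih _ s)
  | orL h _ _ ih1 ih2 =>
      intro Δ s
      exact IPCe.orL (s h) (ih1 _ (Set.insert_subset_insert s)) (ih2 _ (Set.insert_subset_insert s))
  | impR _ ih => intro Δ s; exact IPCe.impR (ih _ (Set.insert_subset_insert s))
  | impL h _ _ ih1 ih2 =>
      intro Δ s
      exact IPCe.impL (s h) (ih1 _ s) (ih2 _ (Set.insert_subset_insert s))
  | allR _ ih => intro Δ s; exact IPCe.allR (ih _ (Set.image_mono s))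
  | allL h _ _ ih1 ih2 =>
      intro Δ s
      exact IPCe.allL (s h) (ih1 _ s) (ih2 _ (Set.insert_subset_insert s))
  | exR _ _ ih1 ih2 => intro Δ s; exact IPCe.exR (ih1 _ s) (ih2 _ s)
  | exL h _ ih => intro Δ s; exact IPCe.exL (s h) (ih _ (Set.insert_subset_insert s))
  | cut _ _ ih1 ih2 => intro Δ s; exact IPCe.cut (ih1 _ s) (ih2 _ (Set.insert_subset_insert s))

lemma NJe.toIPCe {Γ A} (h : NJe Γ A) : IPCe Γ A := by
  induction h with
  | ax h => exact .ax h
  | botE _ ih => exact .cut ih (.botL (Set.mem_insert _ _))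
  | topI => exact .topR
  | andI _ _ ih1 ih2 => exact .andR ih1 ih2
  | andE₁ _ ih =>
      exact .cut ih (.andL (Set.mem_insert _ _) (.ax (Set.mem_insert _ _)))
  | andE₂ _ ih =>
      exact .cut ih (.andL (Set.mem_insert _ _)
        (.ax (Set.mem_insert_of_mem _ (Set.mem_insert _ _))))
  | orI₁ _ ih => exact .orR₁ ih
  | orI₂ _ ih => exact .orR₂ ih
  | orE _ _ _ ih ih1 ih2 =>
      exact .cut ih (.orL (Set.mem_insert _ _)
        (ih1.weaken _ (Set.insert_subset_insert (Set.subset_insert _ _)))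
        (ih2.weaken _ (Set.insert_subset_insert (Set.subset_insert _ _))))
  | impI _ ih => exact .impR ih
  | impE _ _ ih1 ih2 =>
      exact .cut ih1 (.impL (Set.mem_insert _ _)
        (ih2.weaken _ (Set.subset_insert _ _)) (.ax (Set.mem_insert _ _)))
  | allI _ ih => exact .allR ih
  | allE _ _ ihd ih =>
      exact .cut ih (.allL (Set.mem_insert _ _)
        (ihd.weaken _ (Set.subset_insert _ _)) (.ax (Set.mem_insert _ _)))
  | exI _ _ ih1 ih2 => exact .exR ih1 ih2
  | epsI _ ih =>
      exact .cut ih (.exL (Set.mem_insert _ _) (.ax (Set.mem_insert _ _)))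

lemma IPCe.toNJe {Γ A} (h : IPCe Γ A) : NJe Γ A := by
  induction h with
  | ax h => exact .ax h
  | botL h => exact .botE (.ax h)
  | topR => exact .topI
  | andR _ _ ih1 ih2 => exact .andI ih1 ih2
  | andL h _ ih =>
      exact .impE (.impE (.impI (.impI ih)) (.andE₂ (.ax h))) (.andE₁ (.ax h))
  | orR₁ _ ih => exact .orI₁ ih
  | orR₂ _ ih => exact .orI₂ ih
  | orL h _ _ ih1 ih2 => exact .orE (.ax h) ih1 ih2
  | impR _ ih => exact .impI ih
  | impL h _ _ ih1 ih2 => exact .impE (.impI ih2) (.impE (.ax h) ih1)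
  | allR _ ih => exact .allI ih
  | allL h _ _ ih1 ih2 => exact .impE (.impI ih2) (.allE ih1 (.ax h))
  | exR _ _ ih1 ih2 => exact .exI ih1 ih2
  | exL h _ ih => exact .impE (.impI ih) (.epsI (.ax h))
  | cut _ _ ih1 ih2 => exact .impE (.impI ih2) ih1

/-- the sequent calculus IPCε and the natural deduction system NJε
derive exactly the same sequents. -/
theorem NJe_iff_IPCe (Γ : Set Fm) (A : Fm) : NJe Γ A ↔ IPCe Γ A :=
  ⟨NJe.toIPCe, IPCe.toNJe⟩
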